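/- Under randomization of Z, exclusion restriction, and both monotonicity assumptions (Y₀ ≤ Y₁ and R₀ ≤ R₁ pointwise), the intention-to-treat effect E[Y | Z=1] − E[Y | Z=0] equals P(complier and helpable) = P(R₀=0, R₁=1, Y₀=0, Y₁=1). Consequently E[Y|Z=1] − E[Y|Z=0] ≤ P(Y₀=0, Y₁=1), so the upper bound of APCE_H obtained by dividing the ITT by max_z P(Y=1|Z=z) − min_z P(Y=1|Z=z) equals 1 whenever this difference is positive. -/
import Mathlib


open Finset
open scoped Classical

namespace PS

/-- Probability of an event `A` under weight function `p` on a finite sample space. -/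
noncomputable def Prob {Ω : Type*} [Fintype Ω] (p : Ω → ℝ) (A : Ω → Prop) : ℝ :=
  ∑ ω ∈ Finset.univ.filter A, p ω

/-- Conditional probability `P(A | B)`. -/
noncomputable def CProb {Ω : Type*} [Fintype Ω] (p : Ω → ℝ) (A B : Ω → Prop) : ℝ :=
  Prob p (fun ω => A ω ∧ B ω) / Prob p B

/-- Conditional expectation `E[f | B]`. -/
noncomputable def CExp {Ω : Type*} [Fintype Ω] (p : Ω → ℝ) (f : Ω → ℝ) (B : Ω → Prop) : ℝ :=
  (∑ ω ∈ Finset.univ.filter B, p ω * f ω) / Prob p B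

/-- Indicator of a Boolean value, as a real number. -/
def ind (b : Bool) : ℝ := if b then 1 else 0

/-- Observed recommendation `R = R_Z`. -/
def obsR {Ω : Type*} (Z R₀ R₁ : Ω → Bool) (ω : Ω) : Bool := if Z ω then R₁ ω else R₀ ω

/-- Observed outcome `Y = Y_R` (exclusion restriction). -/
def obsY {Ω : Type*} (Rv Y₀ Y₁ : Ω → Bool) (ω : Ω) : Bool := if Rv ω then Y₁ ω else Y₀ ω

/-- `Z` is independent of the vector `(R₀, R₁, Y₀, Y₁)`. -/
def IndepZ {Ω : Type*} [Fintype Ω] (p : Ω → ℝ) (Z R₀ R₁ Y₀ Y₁ : Ω → Bool) : Prop :=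
  ∀ z a b c d : Bool,
    Prob p (fun ω => Z ω = z ∧ R₀ ω = a ∧ R₁ ω = b ∧ Y₀ ω = c ∧ Y₁ ω = d) =
      Prob p (fun ω => Z ω = z) *
        Prob p (fun ω => R₀ ω = a ∧ R₁ ω = b ∧ Y₀ ω = c ∧ Y₁ ω = d)

section helpers
variable {Ω : Type*} [Fintype Ω] (p : Ω → ℝ)

lemma Prob_congr {A B : Ω → Prop} (h : ∀ ω, A ω ↔ B ω) : Prob p A = Prob p B := by
  unfold Prob
  refine Finset.sum_congr ?_ (fun _ _ => rfl)
  ext ω; simp [h ω]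

lemma Prob_eq_zero {A : Ω → Prop} (h : ∀ ω, ¬ A ω) : Prob p A = 0 := by
  unfold Prob
  rw [Finset.filter_false_of_mem (fun ω _ => h ω), Finset.sum_empty]

lemma Prob_nonneg (hp : ∀ ω, 0 ≤ p ω) (A : Ω → Prop) : 0 ≤ Prob p A :=
  Finset.sum_nonneg fun ω _ => hp ω

lemma Prob_mono (hp : ∀ ω, 0 ≤ p ω) {A B : Ω → Prop} (h : ∀ ω, A ω → B ω) :
    Prob p A ≤ Prob p B := by
  unfold Prob
  refine Finset.sum_le_sum_of_subset_of_nonneg ?_ (fun ω _ _ => hp ω)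
  intro ω hω
  simp only [mem_filter, mem_univ, true_and] at *
  exact h ω hω

lemma Prob_split (A B : Ω → Prop) :
    Prob p A = Prob p (fun ω => A ω ∧ B ω) + Prob p (fun ω => A ω ∧ ¬ B ω) := by
  unfold Prob
  rw [← Finset.sum_filter_add_sum_filter_not (univ.filter A) B]
  congr 1 <;> (refine Finset.sum_congr ?_ (fun _ _ => rfl); ext ω; simp [and_comm])

abbrev B4 := Bool × Bool × Bool × Bool

lemma Prob_fiber (A : Ω → Prop) (g : Ω → B4) :
    Prob p A = ∑ v : B4, Prob p (fun ω => A ω ∧ g ω = v) := by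
  unfold Prob
  rw [← Finset.sum_fiberwise (univ.filter A) g p]
  refine Finset.sum_congr rfl fun v _ => ?_
  refine Finset.sum_congr ?_ (fun _ _ => rfl)
  ext ω; simp [and_comm]

lemma indep_fun {Z R₀ R₁ Y₀ Y₁ : Ω → Bool} (hindep : IndepZ p Z R₀ R₁ Y₀ Y₁)
    (q : B4 → Prop) (z : Bool) :
    Prob p (fun ω => Z ω = z ∧ q (R₀ ω, R₁ ω, Y₀ ω, Y₁ ω)) =
      Prob p (fun ω => Z ω = z) * Prob p (fun ω => q (R₀ ω, R₁ ω, Y₀ ω, Y₁ ω)) := by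
  set g : Ω → B4 := fun ω => (R₀ ω, R₁ ω, Y₀ ω, Y₁ ω) with hg
  rw [Prob_fiber p (fun ω => Z ω = z ∧ q (g ω)) g,
      Prob_fiber p (fun ω => q (g ω)) g, Finset.mul_sum]
  refine Finset.sum_congr rfl fun v _ => ?_
  by_cases hv : q v
  · have e1 : Prob p (fun ω => (Z ω = z ∧ q (g ω)) ∧ g ω = v) =
        Prob p (fun ω => Z ω = z ∧ R₀ ω = v.1 ∧ R₁ ω = v.2.1 ∧ Y₀ ω = v.2.2.1 ∧ Y₁ ω = v.2.2.2) := by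
      refine Prob_congr p fun ω => ?_
      constructor
      · rintro ⟨⟨hz, -⟩, hgv⟩
        simp only [hg, Prod.ext_iff] at hgv
        exact ⟨hz, hgv.1, hgv.2.1, hgv.2.2.1, hgv.2.2.2⟩
      · rintro ⟨hz, h1, h2, h3, h4⟩
        have hgv : g ω = v := by simp [hg, Prod.ext_iff, h1, h2, h3, h4]
        exact ⟨⟨hz, hgv ▸ hv⟩, hgv⟩
    have e2 : Prob p (fun ω => q (g ω) ∧ g ω = v) =
        Prob p (fun ω => R₀ ω = v.1 ∧ R₁ ω = v.2.1 ∧ Y₀ ω = v.2.2.1 ∧ Y₁ ω = v.2.2.2) := by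
      refine Prob_congr p fun ω => ?_
      constructor
      · rintro ⟨-, hgv⟩
        simp only [hg, Prod.ext_iff] at hgv
        exact ⟨hgv.1, hgv.2.1, hgv.2.2.1, hgv.2.2.2⟩
      · rintro ⟨h1, h2, h3, h4⟩
        have hgv : g ω = v := by simp [hg, Prod.ext_iff, h1, h2, h3, h4]
        exact ⟨hgv ▸ hv, hgv⟩
    rw [e1, e2, hindep z v.1 v.2.1 v.2.2.1 v.2.2.2]
  · have e1 : Prob p (fun ω => (Z ω = z ∧ q (g ω)) ∧ g ω = v) = 0 :=
      Prob_eq_zero p fun ω ⟨⟨_, hq⟩, hgv⟩ => hv (hgv ▸ hq)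
    have e2 : Prob p (fun ω => q (g ω) ∧ g ω = v) = 0 :=
      Prob_eq_zero p fun ω ⟨hq, hgv⟩ => hv (hgv ▸ hq)
    rw [e1, e2, mul_zero]

lemma CExp_ind (f : Ω → Bool) (B : Ω → Prop) :
    CExp p (fun ω => ind (f ω)) B = CProb p (fun ω => f ω = true) B := by
  unfold CExp CProb Prob
  congr 1
  rw [Finset.sum_filter, Finset.sum_filter]
  refine Finset.sum_congr rfl fun ω _ => ?_
  by_cases hB : B ω <;> by_cases hf : f ω <;> simp [ind, hB, hf]

end helpers

theorem stmt14 {Ω : Type*} [Fintype Ω] (p : Ω → ℝ) (Z R₀ R₁ Y₀ Y₁ : Ω → Bool)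
    (hp : ∀ ω, 0 ≤ p ω) (hsum : ∑ ω, p ω = 1)
    (hZpos : ∀ z : Bool, 0 < Prob p (fun ω => Z ω = z))
    (hindep : IndepZ p Z R₀ R₁ Y₀ Y₁)
    (hmono : ∀ ω, Y₀ ω = true → Y₁ ω = true)
    (hmonoR : ∀ ω, R₀ ω = true → R₁ ω = true) :
    (CExp p (fun ω => ind (obsY (obsR Z R₀ R₁) Y₀ Y₁ ω)) (fun ω => Z ω = true) - CExp p (fun ω => ind (obsY (obsR Z R₀ R₁) Y₀ Y₁ ω)) (fun ω => Z ω = false)) =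
      Prob p (fun ω => R₀ ω = false ∧ R₁ ω = true ∧ Y₀ ω = false ∧ Y₁ ω = true) ∧
    (CExp p (fun ω => ind (obsY (obsR Z R₀ R₁) Y₀ Y₁ ω)) (fun ω => Z ω = true) - CExp p (fun ω => ind (obsY (obsR Z R₀ R₁) Y₀ Y₁ ω)) (fun ω => Z ω = false)) ≤ Prob p (fun ω => Y₀ ω = false ∧ Y₁ ω = true) ∧
    (0 < max (CProb p (fun ω => obsY (obsR Z R₀ R₁) Y₀ Y₁ ω = true) (fun ω => Z ω = true)) (CProb p (fun ω => obsY (obsR Z R₀ R₁) Y₀ Y₁ ω = true) (fun ω => Z ω = false)) - min (CProb p (fun ω => obsY (obsR Z R₀ R₁) Y₀ Y₁ ω = true) (fun ω => Z ω = true)) (CProb p (fun ω => obsY (obsR Z R₀ R₁) Y₀ Y₁ ω = true) (fun ω => Z ω = false)) →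
      (CExp p (fun ω => ind (obsY (obsR Z R₀ R₁) Y₀ Y₁ ω)) (fun ω => Z ω = true) - CExp p (fun ω => ind (obsY (obsR Z R₀ R₁) Y₀ Y₁ ω)) (fun ω => Z ω = false)) / (max (CProb p (fun ω => obsY (obsR Z R₀ R₁) Y₀ Y₁ ω = true) (fun ω => Z ω = true)) (CProb p (fun ω => obsY (obsR Z R₀ R₁) Y₀ Y₁ ω = true) (fun ω => Z ω = false)) - min (CProb p (fun ω => obsY (obsR Z R₀ R₁) Y₀ Y₁ ω = true) (fun ω => Z ω = true)) (CProb p (fun ω => obsY (obsR Z R₀ R₁) Y₀ Y₁ ω = true) (fun ω => Z ω = false))) = 1) := by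
  have hCProb : ∀ z : Bool, CProb p (fun ω => obsY (obsR Z R₀ R₁) Y₀ Y₁ ω = true) (fun ω => Z ω = z)
      = Prob p (fun ω => (if (if z then R₁ ω else R₀ ω) then Y₁ ω else Y₀ ω) = true) := by
    intro z
    unfold CProb
    have he : Prob p (fun ω => obsY (obsR Z R₀ R₁) Y₀ Y₁ ω = true ∧ Z ω = z) =
        Prob p (fun ω => Z ω = z ∧
          (fun v : B4 => (if (if z then v.2.1 else v.1) then v.2.2.2 else v.2.2.1) = true)
            (R₀ ω, R₁ ω, Y₀ ω, Y₁ ω)) := by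
      refine Prob_congr p fun ω => ?_
      cases z <;> cases hZ : Z ω <;> simp [obsY, obsR, hZ] <;> tauto
    have hi := indep_fun p hindep
      (fun v : B4 => (if (if z then v.2.1 else v.1) then v.2.2.2 else v.2.2.1) = true) z
    rw [he, hi, mul_comm, mul_div_assoc, div_self (hZpos z).ne', mul_one]
  have hCExp : ∀ z : Bool, CExp p (fun ω => ind (obsY (obsR Z R₀ R₁) Y₀ Y₁ ω)) (fun ω => Z ω = z)
      = Prob p (fun ω => (if (if z then R₁ ω else R₀ ω) then Y₁ ω else Y₀ ω) = true) := by
    intro z; rw [CExp_ind, hCProb]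
  have h1 := hCExp true
  have h0 := hCExp false
  simp only [if_true, Bool.false_eq_true, if_false] at h1 h0
  have hCH : Prob p (fun ω => (if R₁ ω then Y₁ ω else Y₀ ω) = true) -
      Prob p (fun ω => (if R₀ ω then Y₁ ω else Y₀ ω) = true) =
      Prob p (fun ω => R₀ ω = false ∧ R₁ ω = true ∧ Y₀ ω = false ∧ Y₁ ω = true) := by
    have hsplit := Prob_split p (fun ω => (if R₁ ω then Y₁ ω else Y₀ ω) = true)
      (fun ω => (if R₀ ω then Y₁ ω else Y₀ ω) = true)
    have hA : Prob p (fun ω => (if R₁ ω then Y₁ ω else Y₀ ω) = true ∧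
        (if R₀ ω then Y₁ ω else Y₀ ω) = true) =
        Prob p (fun ω => (if R₀ ω then Y₁ ω else Y₀ ω) = true) := by
      refine Prob_congr p fun ω => ?_
      have h := hmono ω; have hR := hmonoR ω
      revert h hR
      cases R₀ ω <;> cases R₁ ω <;> cases Y₀ ω <;> cases Y₁ ω <;> simp
    have hB : Prob p (fun ω => (if R₁ ω then Y₁ ω else Y₀ ω) = true ∧
        ¬ (if R₀ ω then Y₁ ω else Y₀ ω) = true) =
        Prob p (fun ω => R₀ ω = false ∧ R₁ ω = true ∧ Y₀ ω = false ∧ Y₁ ω = true) := by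
      refine Prob_congr p fun ω => ?_
      have h := hmono ω; have hR := hmonoR ω
      revert h hR
      cases R₀ ω <;> cases R₁ ω <;> cases Y₀ ω <;> cases Y₁ ω <;> simp
    rw [hsplit, hA, hB]; ring
  have hdiff := hCH
  rw [← h1, ← h0] at hdiff
  refine ⟨hdiff, ?_, ?_⟩
  · rw [hdiff]
    exact Prob_mono p hp fun ω h => ⟨h.2.2.1, h.2.2.2⟩
  · intro hpos
    have hnonneg : 0 ≤ CExp p (fun ω => ind (obsY (obsR Z R₀ R₁) Y₀ Y₁ ω)) (fun ω => Z ω = true) -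
        CExp p (fun ω => ind (obsY (obsR Z R₀ R₁) Y₀ Y₁ ω)) (fun ω => Z ω = false) := by
      rw [hdiff]; exact Prob_nonneg p hp _
    have hle : CProb p (fun ω => obsY (obsR Z R₀ R₁) Y₀ Y₁ ω = true) (fun ω => Z ω = false) ≤
        CProb p (fun ω => obsY (obsR Z R₀ R₁) Y₀ Y₁ ω = true) (fun ω => Z ω = true) := by
      rw [hCProb true, hCProb false]
      simp only [if_true, Bool.false_eq_true, if_false]
      have hnn := Prob_nonneg p hp
        (fun ω => R₀ ω = false ∧ R₁ ω = true ∧ Y₀ ω = false ∧ Y₁ ω = true)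
      linarith [hCH]
    rw [max_eq_left hle, min_eq_right hle]
    have hmm : CProb p (fun ω => obsY (obsR Z R₀ R₁) Y₀ Y₁ ω = true) (fun ω => Z ω = true) -
        CProb p (fun ω => obsY (obsR Z R₀ R₁) Y₀ Y₁ ω = true) (fun ω => Z ω = false) =
        CExp p (fun ω => ind (obsY (obsR Z R₀ R₁) Y₀ Y₁ ω)) (fun ω => Z ω = true) -
        CExp p (fun ω => ind (obsY (obsR Z R₀ R₁) Y₀ Y₁ ω)) (fun ω => Z ω = false) := by
      rw [CExp_ind, CExp_ind]
    rw [hmm]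
    have hpos' : 0 < CExp p (fun ω => ind (obsY (obsR Z R₀ R₁) Y₀ Y₁ ω)) (fun ω => Z ω = true) -
        CExp p (fun ω => ind (obsY (obsR Z R₀ R₁) Y₀ Y₁ ω)) (fun ω => Z ω = false) := by
      rw [max_eq_left hle, min_eq_right hle, hmm] at hpos
      exact hpos
    exact div_self hpos'.ne'

end PS
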